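/- arXiv:2103.10132 — 4 statements merged into one kernel-verified Lean document; each statement's English description precedes it below -/
import Mathlib

section
/- Let θ > 0 and m a natural number. Then the series Σ_{k=m+1}^{∞} |J_k(θ)| converges, and for every real y with |y| ≤ θ the truncated Chebyshev expansion satisfies | P^C_{m,θ}(y) − e^{−i y} | ≤ 2 Σ_{k=m+1}^{∞} |J_k(θ)|. -/
/-!
The Fourier coefficients of `t ↦ exp (i θ sin t)` are `J_k(θ)` at `k ≥ 0` and `(-1)^k J_k(θ)`
at `-k`. The three-term recurrence `θ (J_k + J_{k+2}) = 2 (k+1) J_{k+1}` together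
with `|J_k| ≤ 1` gives `|J_{k+2}(θ)| ≤ θ² / ((k+1)(k+2))`, so the coefficients are absolutely
summable and the Fourier series converges pointwise. Evaluated at `t = φ - π/2` it is the
Jacobi–Anger expansion `exp (-i θ cos φ) = J_0(θ) + 2 ∑_{k ≥ 1} (-i)^k J_k(θ) cos (k φ)`.
For `y = θ cos φ` we have `T_k (y / θ) = cos (k φ)`, so `P^C_{m,θ}(y)` is a partial sum of this
series and the error is its tail, whose `k`-th term has norm at most `2 |J_k(θ)|`.
-/

/-- The Bessel function of the first kind of integer order `k`:
`J_k(θ) = (1/π) ∫_0^π cos(kτ - θ sin τ) dτ`. -/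
noncomputable def besselJ (k : ℕ) (θ : ℝ) : ℝ :=
  (1 / Real.pi) * ∫ τ in (0 : ℝ)..Real.pi, Real.cos (k * τ - θ * Real.sin τ)

open Real intervalIntegral
open Complex (I)

theorem abs_besselJ_le_one (k : ℕ) (θ : ℝ) : |besselJ k θ| ≤ 1 := by
  have h : ‖∫ τ in (0 : ℝ)..π, cos (k * τ - θ * sin τ)‖ ≤ 1 * |π - 0| :=
    norm_integral_le_of_norm_le_const fun τ _ ↦ abs_cos_le_one _
  rw [sub_zero, abs_of_pos pi_pos, one_mul, Real.norm_eq_abs] at h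
  rw [besselJ, abs_mul, abs_of_pos (by positivity), one_div, inv_mul_le_one₀ pi_pos]
  exact h

theorem mul_integral_cos_mul_cos_sub_sin (k : ℕ) (θ : ℝ) :
    θ * ∫ τ in (0 : ℝ)..π, cos τ * cos (k * τ - θ * sin τ) =
      k * ∫ τ in (0 : ℝ)..π, cos (k * τ - θ * sin τ) := by
  have hderiv : ∀ τ ∈ Set.uIcc 0 π, HasDerivAt (fun t ↦ sin (k * t - θ * sin t))
      ((k - θ * cos τ) * cos (k * τ - θ * sin τ)) τ := fun τ _ ↦ by
    refine ((((hasDerivAt_id τ).const_mul (k : ℝ)).sub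
      ((hasDerivAt_sin τ).const_mul θ)).sin).congr_deriv ?_
    simp only [Pi.sub_apply, id, mul_one]; ring
  have hftc :=
    integral_eq_sub_of_hasDerivAt hderiv (by apply Continuous.intervalIntegrable; fun_prop)
  simp only [mul_zero, sin_zero, sin_pi, sub_zero, sin_nat_mul_pi, sub_mul, mul_assoc] at hftc
  rw [integral_sub (by apply Continuous.intervalIntegrable; fun_prop)
    (by apply Continuous.intervalIntegrable; fun_prop), integral_const_mul,
    integral_const_mul] at hftc
  linarith

theorem besselJ_recurrence (k : ℕ) (θ : ℝ) :
    θ * (besselJ k θ + besselJ (k + 2) θ) = 2 * (k + 1) * besselJ (k + 1) θ := by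
  have hsum : ∀ τ, cos (k * τ - θ * sin τ) + cos ((k + 2 : ℕ) * τ - θ * sin τ) =
      2 * (cos τ * cos ((k + 1 : ℕ) * τ - θ * sin τ)) := fun τ ↦ by
    have := two_mul_cos_mul_cos ((k + 1 : ℕ) * τ - θ * sin τ) τ
    push_cast at this ⊢
    rw [show (k : ℝ) * τ - θ * sin τ = (k + 1) * τ - θ * sin τ - τ by ring,
      show ((k : ℝ) + 2) * τ - θ * sin τ = (k + 1) * τ - θ * sin τ + τ by ring]
    linarith
  have hint := mul_integral_cos_mul_cos_sub_sin (k + 1) θ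
  simp only [besselJ, ← mul_add]
  rw [← integral_add (by apply Continuous.intervalIntegrable; fun_prop)
    (by apply Continuous.intervalIntegrable; fun_prop), integral_congr fun τ _ ↦ hsum τ,
    integral_const_mul]
  push_cast at hint ⊢
  linear_combination (2 / π) * hint

theorem abs_besselJ_succ_le (k : ℕ) (θ : ℝ) : |besselJ (k + 1) θ| ≤ |θ| / (k + 1) := by
  rw [le_div_iff₀ (by positivity)]
  have h := congrArg abs (besselJ_recurrence k θ)
  rw [abs_mul, abs_mul, abs_of_pos (by positivity : (0 : ℝ) < 2 * (k + 1))] at h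
  have := (abs_add_le (besselJ k θ) (besselJ (k + 2) θ)).trans
    (add_le_add (abs_besselJ_le_one k θ) (abs_besselJ_le_one (k + 2) θ))
  nlinarith [abs_nonneg θ]

theorem abs_besselJ_add_two_le (k : ℕ) (θ : ℝ) :
    |besselJ (k + 2) θ| ≤ θ ^ 2 / ((k + 1) * (k + 2)) := by
  have hrec := congrArg abs (besselJ_recurrence (k + 1) θ)
  push_cast at hrec
  rw [abs_mul, abs_mul, abs_of_pos (by positivity : (0 : ℝ) < 2 * (k + 1 + 1))] at hrec
  have hneighbours : |besselJ (k + 1) θ + besselJ (k + 1 + 2) θ| * (k + 1) ≤ 2 * |θ| := by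
    have h₃ : |besselJ (k + 3) θ| ≤ |θ| / (k + 1) :=
      (abs_besselJ_succ_le (k + 2) θ).trans <|
        div_le_div_of_nonneg_left (abs_nonneg θ) (by positivity) (by push_cast; linarith)
    rw [← le_div_iff₀ (by positivity), mul_div_assoc, two_mul]
    exact (abs_add_le _ _).trans (add_le_add (abs_besselJ_succ_le k θ) h₃)
  rw [le_div_iff₀ (by positivity), ← sq_abs]
  nlinarith [abs_nonneg θ]

theorem summable_abs_besselJ (θ : ℝ) : Summable fun k ↦ |besselJ k θ| := by
  rw [← summable_nat_add_iff 2]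
  have hsq : Summable fun k : ℕ ↦ θ ^ 2 / ((k + 1 : ℕ) : ℝ) ^ 2 :=
    ((summable_nat_add_iff 1).mpr (summable_nat_pow_inv.mpr one_lt_two)).mul_left (θ ^ 2)
  refine .of_nonneg_of_le (fun _ ↦ abs_nonneg _)
    (fun k ↦ (abs_besselJ_add_two_le k θ).trans ?_) hsq
  push_cast
  gcongr
  linarith

open MeasureTheory

theorem intervalIntegral.integral_symm_eq_integral_add_comp_neg {E : Type*}
    [NormedAddCommGroup E] [NormedSpace ℝ E] {f : ℝ → E} {a : ℝ}
    (h₁ : IntervalIntegrable f volume (-a) 0) (h₂ : IntervalIntegrable f volume 0 a) :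
    ∫ x in -a..a, f x = ∫ x in 0..a, (f x + f (-x)) := by
  have h₁' : IntervalIntegrable (fun x ↦ f (-x)) volume 0 a := by
    simpa using (IntervalIntegrable.iff_comp_neg (f := f) |>.1 h₁).symm
  rw [← integral_add_adjacent_intervals h₁ h₂, integral_add h₂ h₁', integral_comp_neg, neg_zero,
    add_comm]

instance : Fact (0 < 2 * π) := ⟨two_pi_pos⟩

noncomputable def expISin (θ : ℝ) : C(AddCircle (2 * π), ℂ) where
  toFun := (sin_periodic.comp fun s ↦ Complex.exp (θ * s * I)).lift
  continuous_toFun :=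
    (by fun_prop : Continuous fun t ↦ Complex.exp (θ * sin t * I)).quotient_liftOn' _

theorem expISin_coe (θ x : ℝ) : expISin θ x = Complex.exp (θ * sin x * I) := rfl

theorem fourier_coe_two_pi (n : ℤ) (x : ℝ) :
    fourier n (x : AddCircle (2 * π)) = Complex.exp (n * x * I) := by
  rw [fourier_coe_apply]
  congr 1
  push_cast
  field_simp

theorem fourierCoeff_expISin (θ : ℝ) (n : ℤ) :
    fourierCoeff (expISin θ) n =
      ((1 / π * ∫ τ in (0 : ℝ)..π, cos (n * τ - θ * sin τ) : ℝ) : ℂ) := by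
  have hpair : ∀ τ : ℝ, fourier (-n) (τ : AddCircle (2 * π)) • expISin θ τ +
      fourier (-n) ((-τ : ℝ) : AddCircle (2 * π)) • expISin θ (-τ : ℝ) =
      ((2 * cos (n * τ - θ * sin τ) : ℝ) : ℂ) := fun τ ↦ by
    rw [Complex.ofReal_mul, Complex.ofReal_ofNat, Complex.ofReal_cos, Complex.two_cos]
    simp only [fourier_coe_two_pi, expISin_coe, smul_eq_mul, ← Complex.exp_add, sin_neg]
    rw [add_comm]
    congr 1 <;> congr 1 <;> push_cast <;> ring
  rw [fourierCoeff_eq_intervalIntegral _ n (-π), show -π + 2 * π = π by ring,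
    integral_symm_eq_integral_add_comp_neg (by apply Continuous.intervalIntegrable; fun_prop)
      (by apply Continuous.intervalIntegrable; fun_prop), integral_congr fun τ _ ↦ hpair τ,
    intervalIntegral.integral_ofReal, intervalIntegral.integral_const_mul]
  rw [Complex.real_smul]
  push_cast
  field_simp

theorem fourierCoeff_expISin_natCast (θ : ℝ) (k : ℕ) :
    fourierCoeff (expISin θ) k = besselJ k θ := by
  rw [fourierCoeff_expISin, besselJ, Int.cast_natCast]

theorem integral_cos_neg_nat_mul_sub (k : ℕ) (θ : ℝ) :
    ∫ τ in (0 : ℝ)..π, cos (-k * τ - θ * sin τ) =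
      (-1) ^ k * ∫ τ in (0 : ℝ)..π, cos (k * τ - θ * sin τ) := by
  have hreflect :=
    integral_comp_sub_left (fun τ ↦ cos (-k * τ - θ * sin τ)) (a := 0) (b := π) π
  rw [sub_self, sub_zero] at hreflect
  rw [← hreflect, ← intervalIntegral.integral_const_mul]
  refine integral_congr fun τ _ ↦ ?_
  rw [sin_pi_sub, ← cos_nat_mul_pi_sub, ← cos_neg]
  ring_nf

theorem fourierCoeff_expISin_neg_natCast (θ : ℝ) (k : ℕ) :
    fourierCoeff (expISin θ) (-k) = (-1) ^ k * besselJ k θ := by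
  rw [fourierCoeff_expISin, besselJ, Int.cast_neg, Int.cast_natCast,
    integral_cos_neg_nat_mul_sub]
  push_cast
  ring

theorem summable_fourierCoeff_expISin (θ : ℝ) : Summable (fourierCoeff (expISin θ)) := by
  refine .of_norm (summable_int_iff_summable_nat_and_neg.2 ⟨?_, ?_⟩) <;>
    simpa [fourierCoeff_expISin_natCast, fourierCoeff_expISin_neg_natCast] using
      summable_abs_besselJ θ

noncomputable def jacobiAngerTerm (θ φ : ℝ) (k : ℕ) : ℂ :=
  2 * ((-I) ^ k * besselJ k θ * cos (k * φ))

theorem norm_jacobiAngerTerm_le (θ φ : ℝ) (k : ℕ) :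
    ‖jacobiAngerTerm θ φ k‖ ≤ 2 * |besselJ k θ| := by
  simp only [jacobiAngerTerm, norm_mul, norm_pow, norm_neg, Complex.norm_I, one_pow, one_mul,
    Complex.norm_real, Real.norm_eq_abs, Complex.norm_ofNat]
  gcongr
  exact mul_le_of_le_one_right (abs_nonneg _) (abs_cos_le_one _)

theorem sum_range_succ_jacobiAngerTerm (θ φ : ℝ) (m : ℕ) :
    ∑ k ∈ Finset.range (m + 1), jacobiAngerTerm θ φ k =
      2 * ∑ k ∈ Finset.Icc 1 m, (-I) ^ k * besselJ k θ * cos (k * φ) +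
        2 * besselJ 0 θ := by
  rw [Finset.range_eq_Ico, Finset.sum_eq_sum_Ico_succ_bot (Nat.succ_pos m), Nat.succ_eq_add_one,
    zero_add, Finset.Ico_add_one_right_eq_Icc, add_comm]
  simp [jacobiAngerTerm, Finset.mul_sum]

theorem jacobiAngerTerm_eq (θ φ : ℝ) (k : ℕ) :
    jacobiAngerTerm θ φ k = besselJ k θ * Complex.exp (k * (φ - π / 2) * I) +
      (-1) ^ k * besselJ k θ * Complex.exp (-k * (φ - π / 2) * I) := by
  have h₁ : Complex.exp (k * (φ - π / 2) * I) = (-I) ^ k * Complex.exp (k * φ * I) := by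
    rw [show (k : ℂ) * (φ - π / 2) * I = k * φ * I + k * (-π / 2 * I) by ring,
      Complex.exp_add, Complex.exp_nat_mul, Complex.exp_neg_pi_div_two_mul_I, mul_comm]
  have h₂ : Complex.exp (-k * (φ - π / 2) * I) = I ^ k * Complex.exp (-(k * φ) * I) := by
    rw [show -(k : ℂ) * (φ - π / 2) * I = -(k * φ) * I + k * (π / 2 * I) by ring,
      Complex.exp_add, Complex.exp_nat_mul, Complex.exp_pi_div_two_mul_I, mul_comm]
  have hcos := Complex.two_cos (k * φ)
  rw [jacobiAngerTerm]
  push_cast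
  linear_combination -(besselJ k θ : ℂ) * h₁ - (-1) ^ k * (besselJ k θ : ℂ) * h₂ +
    (-I) ^ k * (besselJ k θ : ℂ) * hcos

-- The `k = 0` term is `2 J_0(θ)`, twice the constant term of the expansion.
theorem hasSum_jacobiAngerTerm (θ φ : ℝ) :
    HasSum (jacobiAngerTerm θ φ) (Complex.exp (-I * (θ * cos φ)) + besselJ 0 θ) := by
  have hzero : fourierCoeff (expISin θ) 0 = besselJ 0 θ := by
    simpa using fourierCoeff_expISin_natCast θ 0
  have H := (has_pointwise_sum_fourier_series_of_summable (summable_fourierCoeff_expISin θ)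
    ((φ - π / 2 : ℝ) : AddCircle (2 * π))).nat_add_neg
  simp only [expISin_coe, sin_sub_pi_div_two, fourierCoeff_expISin_natCast,
    fourierCoeff_expISin_neg_natCast, fourier_coe_two_pi, smul_eq_mul, hzero] at H
  convert H using 1
  · ext k
    rw [jacobiAngerTerm_eq]
    push_cast
    ring_nf
  · rw [Int.cast_zero, zero_mul, zero_mul, Complex.exp_zero, mul_one]
    push_cast
    ring_nf

theorem HasSum.norm_sub_sum_range_le {E : Type*} [NormedAddCommGroup E] {f : ℕ → E}
    {g : ℕ → ℝ} {a : E} (hf : HasSum f a) (hg : Summable g) (hfg : ∀ k, ‖f k‖ ≤ g k) (n : ℕ) :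
    ‖a - ∑ k ∈ Finset.range n, f k‖ ≤ ∑' k, g (k + n) :=
  ((hasSum_nat_add_iff' n).mpr hf).norm_le_of_bounded
    ((summable_nat_add_iff n).mpr hg).hasSum fun k ↦ hfg (k + n)

/-- For `θ > 0` and `m ∈ ℕ`, the series `Σ_{k=m+1}^∞ |J_k(θ)|` converges, and for all real
`y` with `|y| ≤ θ`, the truncated Chebyshev expansion
`P^C_{m,θ}(y) = J_0(θ) + 2 Σ_{k=1}^m (-i)^k J_k(θ) T_k(y/θ)` satisfies
`|P^C_{m,θ}(y) - e^{-iy}| ≤ 2 Σ_{k=m+1}^∞ |J_k(θ)|`. -/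
theorem chebyshev_truncation_error (θ : ℝ) (hθ : 0 < θ) (m : ℕ) :
    Summable (fun k : ℕ => |besselJ (m + 1 + k) θ|) ∧
      ∀ y : ℝ, |y| ≤ θ →
        ‖(((besselJ 0 θ : ℝ) : ℂ) +
                2 * ∑ k ∈ Finset.Icc 1 m,
                  (-Complex.I) ^ k * ((besselJ k θ : ℝ) : ℂ) *
                    (((Polynomial.Chebyshev.T ℝ k).eval (y / θ) : ℝ) : ℂ)) -
              Complex.exp ((-Complex.I) * (y : ℂ))‖ ≤
          2 * ∑' k : ℕ, |besselJ (m + 1 + k) θ| := by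
  have htail : Summable fun k ↦ |besselJ (m + 1 + k) θ| := by
    simpa only [add_comm] using (summable_nat_add_iff (m + 1)).mpr (summable_abs_besselJ θ)
  refine ⟨htail, fun y hy ↦ ?_⟩
  obtain ⟨φ, hφ⟩ : ∃ φ, cos φ = y / θ :=
    ⟨arccos (y / θ), cos_arccos ((le_div_iff₀ hθ).2 (by linarith [neg_abs_le y]))
      ((div_le_iff₀ hθ).2 (by linarith [le_abs_self y]))⟩
  have hy : θ * cos φ = y := by rw [hφ]; field_simp
  simp only [← hφ, Polynomial.Chebyshev.T_real_cos, Int.cast_natCast]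
  calc _ = ‖(Complex.exp (-I * (θ * cos φ)) + besselJ 0 θ) -
        ∑ k ∈ Finset.range (m + 1), jacobiAngerTerm θ φ k‖ := by
        rw [sum_range_succ_jacobiAngerTerm, ← hy, norm_sub_rev]; congr 1; push_cast; ring
    _ ≤ ∑' k, 2 * |besselJ (k + (m + 1)) θ| :=
        (hasSum_jacobiAngerTerm θ φ).norm_sub_sum_range_le ((summable_abs_besselJ θ).mul_left 2)
          (norm_jacobiAngerTerm_le θ φ) (m + 1)
    _ = _ := by rw [tsum_mul_left]; simp only [add_comm]
end

section
/- Let m be a natural number and let θ be a real number with 0 < θ ≤ m + 1. Then the truncated Chebyshev expansion satisfies sup_{−θ ≤ y ≤ θ} | P^C_{m,θ}(y) − e^{−i y} | ≤ 4 ( e^{1 − θ²/(2m+2)²} · θ/(2m+2) )^{m+1}. -/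
open Complex
open scoped Real

theorem intervalIntegral_add_mul_I_eq_of_periodic {E : Type*} [NormedAddCommGroup E]
    [NormedSpace ℂ E] [CompleteSpace E] {f : ℂ → E} (hf : Differentiable ℂ f) {T : ℝ}
    (hT : Function.Periodic f T) (a b : ℝ) :
    ∫ x in a..a + T, f (x + b * I) = ∫ x in a..a + T, f x := by
  have hrect := integral_boundary_rect_eq_zero_of_differentiableOn f a (↑(a + T) + b * I)
    hf.differentiableOn
  have hsides : ∀ y : ℝ, f (↑(a + T) + y * I) = f (a + y * I) := fun y => by
    rw [ofReal_add, add_right_comm, hT]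
  simp only [ofReal_re, ofReal_im, add_re, add_im, mul_re, mul_im, I_re, I_im, mul_zero, mul_one,
    sub_zero, add_zero, zero_add, ofReal_zero, zero_mul, hsides] at hrect
  rw [add_sub_cancel_right, sub_eq_zero] at hrect
  exact hrect.symm

theorem intervalIntegral_symmetric_eq_integral_add_comp_neg {E : Type*} [NormedAddCommGroup E]
    [NormedSpace ℝ E] {f : ℝ → E} (hf : Continuous f) (a : ℝ) :
    ∫ x in -a..a, f x = ∫ x in 0..a, (f x + f (-x)) := by
  have hf_neg : Continuous fun x => f (-x) := hf.comp continuous_neg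
  rw [← intervalIntegral.integral_add_adjacent_intervals (b := 0) (hf.intervalIntegrable _ _)
      (hf.intervalIntegrable _ _),
    intervalIntegral.integral_add (hf.intervalIntegrable _ _)
      (hf_neg.intervalIntegrable _ _),
    intervalIntegral.integral_comp_neg, neg_zero, add_comm]

theorem sum_range_succ_eq_add_sum_Icc_one {M : Type*} [AddCommMonoid M] (f : ℕ → M) (m : ℕ) :
    ∑ k ∈ Finset.range (m + 1), f k = f 0 + ∑ k ∈ Finset.Icc 1 m, f k := by
  rw [Finset.range_eq_Ico, Finset.sum_eq_sum_Ico_succ_bot m.succ_pos, zero_add,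
    Nat.succ_eq_add_one, Finset.Ico_add_one_right_eq_Icc]

noncomputable def jacobiAngerIntegrand (θ : ℝ) (n : ℤ) (w : ℂ) : ℂ :=
  exp (-I * (n * w + θ * cos w))

noncomputable def jacobiAngerCoeff (θ : ℝ) (n : ℤ) : ℂ :=
  (2 * π)⁻¹ • ∫ x in -π..π, jacobiAngerIntegrand θ n x

theorem jacobiAngerIntegrand_periodic (θ : ℝ) (n : ℤ) :
    Function.Periodic (jacobiAngerIntegrand θ n) ((2 * π : ℝ) : ℂ) := fun w => by
  have : -I * (n * (w + 2 * π) + θ * cos w)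
      = -I * (n * w + θ * cos w) + (-n : ℤ) * (2 * π * I) := by
    push_cast; ring
  simp only [jacobiAngerIntegrand, ofReal_mul, ofReal_ofNat, cos_add_two_pi, this, exp_add,
    exp_int_mul_two_pi_mul_I, mul_one]

theorem jacobiAngerIntegrand_ofReal_periodic (θ : ℝ) (n : ℤ) :
    Function.Periodic (fun x : ℝ => jacobiAngerIntegrand θ n x) (2 * π) := fun x => by
  simpa using jacobiAngerIntegrand_periodic θ n x

theorem jacobiAngerIntegrand_pi_div_two_sub (θ τ : ℝ) (k : ℕ) :
    jacobiAngerIntegrand θ k ↑(π / 2 - τ)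
      = (-I) ^ k * exp ((k * τ - θ * Real.sin τ : ℝ) * I) := by
  have hI : exp (-(π / 2 : ℂ) * I) = -I := by
    rw [exp_mul_I, ← ofReal_ofNat, ← ofReal_div, ← ofReal_neg, ← ofReal_cos, ← ofReal_sin,
      Real.cos_neg, Real.sin_neg, Real.cos_pi_div_two, Real.sin_pi_div_two]
    simp
  rw [jacobiAngerIntegrand, ofReal_sub, ofReal_div, ofReal_ofNat, cos_pi_div_two_sub]
  conv_rhs => rw [← hI, ← exp_nat_mul, ← exp_add]
  congr 1
  push_cast
  ring

theorem jacobiAngerCoeff_natCast (θ : ℝ) (k : ℕ) :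
    jacobiAngerCoeff θ k = (-I) ^ k * besselJ k θ := by
  have hcont : Continuous fun τ : ℝ => exp ((k * τ - θ * Real.sin τ : ℝ) * I) := by fun_prop
  have hshift : ∫ x in -π..π, jacobiAngerIntegrand θ k x
      = ∫ τ in -π..π, jacobiAngerIntegrand θ k ↑(π / 2 - τ) := by
    rw [intervalIntegral.integral_comp_sub_left (fun x : ℝ => jacobiAngerIntegrand θ k x)]
    convert (jacobiAngerIntegrand_ofReal_periodic θ k).intervalIntegral_add_eq (-π) (π / 2 - π)
      using 2 <;> ring
  have heven : ∫ τ in -π..π, exp ((k * τ - θ * Real.sin τ : ℝ) * I)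
      = 2 * ((∫ τ in 0..π, Real.cos (k * τ - θ * Real.sin τ) : ℝ) : ℂ) := by
    rw [intervalIntegral_symmetric_eq_integral_add_comp_neg hcont,
      ← intervalIntegral.integral_ofReal, ← intervalIntegral.integral_const_mul]
    congr 1 with τ
    rw [ofReal_cos, two_cos]
    congr 2
    push_cast [Real.sin_neg]
    ring
  rw [jacobiAngerCoeff, hshift]
  simp_rw [jacobiAngerIntegrand_pi_div_two_sub]
  rw [intervalIntegral.integral_const_mul, heven, besselJ, Complex.real_smul]
  push_cast
  field_simp

theorem jacobiAngerCoeff_neg (θ : ℝ) (n : ℤ) :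
    jacobiAngerCoeff θ (-n) = jacobiAngerCoeff θ n := by
  have h := intervalIntegral.integral_comp_neg (a := -π) (b := π)
    fun x : ℝ => jacobiAngerIntegrand θ n x
  rw [neg_neg] at h
  rw [jacobiAngerCoeff, jacobiAngerCoeff, ← h]
  simp only [jacobiAngerIntegrand, Int.cast_neg, ofReal_neg, cos_neg, neg_mul, mul_neg]

theorem norm_jacobiAngerCoeff_le (θ a : ℝ) (n : ℤ) :
    ‖jacobiAngerCoeff θ n‖ ≤ Real.exp (n * a + |θ| * |Real.sinh a|) := by
  have hpt : ∀ x : ℝ, ‖jacobiAngerIntegrand θ n (x + a * I)‖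
      ≤ Real.exp (n * a + |θ| * |Real.sinh a|) := fun x => by
    rw [jacobiAngerIntegrand, norm_exp, Real.exp_le_exp]
    have hre : (-I * (n * (x + a * I) + θ * cos (x + a * I))).re
        = n * a - θ * Real.sinh a * Real.sin x := by
      simp [cos_add_mul_I, sin_ofReal_re, sinh_ofReal_re, cos_ofReal_re, cosh_ofReal_re]
      ring
    have hsin : -(θ * Real.sinh a * Real.sin x) ≤ |θ| * |Real.sinh a| :=
      calc -(θ * Real.sinh a * Real.sin x) ≤ |θ| * |Real.sinh a| * |Real.sin x| := by
            rw [← abs_mul, ← abs_mul]; exact neg_le_abs _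
        _ ≤ |θ| * |Real.sinh a| := mul_le_of_le_one_right (by positivity) (Real.abs_sin_le_one x)
    linarith
  have hshift := intervalIntegral_add_mul_I_eq_of_periodic
    (by unfold jacobiAngerIntegrand; fun_prop) (jacobiAngerIntegrand_periodic θ n) (-π) a
  rw [neg_add_eq_sub, show 2 * π - π = π by ring] at hshift
  have hint := intervalIntegral.norm_integral_le_of_norm_le_const (a := -π) (b := π)
    fun x _ => hpt x
  rw [hshift, show π - -π = 2 * π by ring, abs_of_pos Real.two_pi_pos] at hint
  rw [jacobiAngerCoeff, norm_smul, norm_inv, Real.norm_of_nonneg Real.two_pi_pos.le]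
  calc (2 * π)⁻¹ * ‖∫ x in -π..π, jacobiAngerIntegrand θ n x‖
      ≤ (2 * π)⁻¹ * (Real.exp (n * a + |θ| * |Real.sinh a|) * (2 * π)) := by gcongr
    _ = _ := by field_simp

theorem norm_jacobiAngerCoeff_natCast_le (θ : ℝ) {q : ℝ} (hq : 0 < q) (hq1 : q ≤ 1) (k : ℕ) :
    ‖jacobiAngerCoeff θ k‖ ≤ Real.exp (|θ| / 2 * (q⁻¹ - q)) * q ^ k := by
  have hq_le_inv : q ≤ q⁻¹ := hq1.trans (one_le_inv₀ hq |>.mpr hq1)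
  calc ‖jacobiAngerCoeff θ k‖
      ≤ Real.exp ((k : ℤ) * Real.log q + |θ| * |Real.sinh (Real.log q)|) :=
        norm_jacobiAngerCoeff_le θ _ _
    _ = _ := by
      rw [Real.sinh_log hq, abs_of_nonpos (a := (q - q⁻¹) / 2) (by linarith), add_comm,
        Real.exp_add, Int.cast_natCast, Real.exp_nat_mul, Real.exp_log hq]
      ring_nf

local instance inst_s9 : Fact (0 < 2 * π) := ⟨Real.two_pi_pos⟩

theorem fourier_coe_apply_two_pi (n : ℤ) (x : ℝ) :
    fourier n (x : AddCircle (2 * π)) = exp (n * x * I) := by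
  rw [fourier_coe_apply]
  congr 1
  field_simp
  push_cast
  ring

noncomputable def jacobiAngerCircle (θ : ℝ) : C(AddCircle (2 * π), ℂ) :=
  ⟨(jacobiAngerIntegrand_ofReal_periodic θ 0).lift,
    (by unfold jacobiAngerIntegrand; fun_prop :
      Continuous fun x : ℝ => jacobiAngerIntegrand θ 0 x).quotient_liftOn' _⟩

theorem jacobiAngerCircle_coe (θ x : ℝ) : jacobiAngerCircle θ x = exp (-I * θ * cos x) := by
  simp [jacobiAngerCircle, jacobiAngerIntegrand, mul_assoc]

theorem fourierCoeff_jacobiAngerCircle (θ : ℝ) :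
    fourierCoeff (jacobiAngerCircle θ) = jacobiAngerCoeff θ := by
  ext n
  rw [fourierCoeff_eq_intervalIntegral _ n (-π), jacobiAngerCoeff, neg_add_eq_sub,
    show 2 * π - π = π by ring, one_div]
  refine congrArg _ (intervalIntegral.integral_congr fun x _ => ?_)
  rw [fourier_coe_apply_two_pi, jacobiAngerCircle_coe, jacobiAngerIntegrand, smul_eq_mul,
    ← exp_add]
  push_cast
  ring_nf

theorem summable_jacobiAngerCoeff (θ : ℝ) : Summable (jacobiAngerCoeff θ) := by
  have hnat : Summable fun k : ℕ => jacobiAngerCoeff θ k :=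
    .of_norm_bounded (summable_geometric_two.mul_left _)
      fun k => norm_jacobiAngerCoeff_natCast_le θ (by norm_num) (by norm_num) k
  exact .of_nat_of_neg hnat (by simpa only [jacobiAngerCoeff_neg] using hnat)

theorem hasSum_jacobiAngerCoeff_mul_exp (θ φ : ℝ) :
    HasSum (fun n : ℤ => jacobiAngerCoeff θ n * exp (n * φ * I)) (exp (-I * θ * cos φ)) := by
  have h := has_pointwise_sum_fourier_series_of_summable (f := jacobiAngerCircle θ)
    (fourierCoeff_jacobiAngerCircle θ ▸ summable_jacobiAngerCoeff θ) (φ : AddCircle (2 * π))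
  simpa only [fourierCoeff_jacobiAngerCircle, fourier_coe_apply_two_pi, jacobiAngerCircle_coe,
    smul_eq_mul] using h

theorem abs_besselJ_le (θ : ℝ) {q : ℝ} (hq : 0 < q) (hq1 : q ≤ 1) (k : ℕ) :
    |besselJ k θ| ≤ Real.exp (|θ| / 2 * (q⁻¹ - q)) * q ^ k := by
  simpa [jacobiAngerCoeff_natCast] using norm_jacobiAngerCoeff_natCast_le θ hq hq1 k

theorem hasSum_besselJ_mul_chebyshevT (θ : ℝ) {x : ℝ} (hx : x ∈ Set.Icc (-1) 1) :
    HasSum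
      (fun k : ℕ => 2 * ((-I) ^ k * besselJ k θ * ((Polynomial.Chebyshev.T ℝ k).eval x : ℝ)))
      (exp (-I * θ * x) + besselJ 0 θ) := by
  set φ := Real.arccos x
  have hcos : Real.cos φ = x := Real.cos_arccos hx.1 hx.2
  have h := (hasSum_jacobiAngerCoeff_mul_exp θ φ).nat_add_neg
  rw [← ofReal_cos, hcos] at h
  convert h using 1
  · ext k
    rw [jacobiAngerCoeff_neg, ← mul_add, jacobiAngerCoeff_natCast, ← hcos,
      Polynomial.Chebyshev.T_real_cos, ofReal_cos, mul_left_comm, two_cos]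
    push_cast
    ring_nf
  · simpa using (jacobiAngerCoeff_natCast θ 0).symm

theorem norm_two_mul_besselJ_mul_chebyshevT_le (θ : ℝ) {q : ℝ} (hq : 0 < q) (hq1 : q ≤ 1)
    {x : ℝ} (hx : x ∈ Set.Icc (-1) 1) (k : ℕ) :
    ‖2 * ((-I) ^ k * besselJ k θ * ((Polynomial.Chebyshev.T ℝ k).eval x : ℝ))‖
      ≤ 2 * Real.exp (|θ| / 2 * (q⁻¹ - q)) * q ^ k := by
  have hJ := abs_besselJ_le θ hq hq1 k
  have hT := Polynomial.Chebyshev.abs_eval_T_real_le_one k (abs_le.mpr hx)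
  simp only [norm_mul, norm_pow, norm_neg, norm_I, one_pow, one_mul, norm_real, Real.norm_eq_abs,
    RCLike.norm_ofNat]
  nlinarith [mul_le_mul hJ hT (abs_nonneg _) (by positivity)]

theorem exp_half_mul_inv_sub_mul_pow_eq (θ : ℝ) (hθ : θ ≠ 0) (m : ℕ) :
    Real.exp (θ / 2 * ((θ / (2 * m + 2))⁻¹ - θ / (2 * m + 2))) * (θ / (2 * m + 2)) ^ (m + 1)
      = (Real.exp (1 - θ ^ 2 / (2 * m + 2) ^ 2) * θ / (2 * m + 2)) ^ (m + 1) := by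
  rw [mul_div_assoc, mul_pow, ← Real.exp_nat_mul]
  congr 2
  field_simp
  push_cast
  ring

/-- For `m ∈ ℕ` and `0 < θ ≤ m + 1`, the truncated Chebyshev expansion
`P^C_{m,θ}(y) = J_0(θ) + 2 Σ_{k=1}^m (-i)^k J_k(θ) T_k(y/θ)` satisfies
`sup_{-θ ≤ y ≤ θ} |P^C_{m,θ}(y) - e^{-iy}| ≤ 4 (e^{1 - θ²/(2m+2)²} θ/(2m+2))^{m+1}`. -/
theorem chebyshev_truncation_error_bound (m : ℕ) (θ : ℝ) (hθ : 0 < θ)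
    (hθm : θ ≤ (m : ℝ) + 1) :
    (⨆ y : Set.Icc (-θ) θ,
        norm
          ((((besselJ 0 θ : ℝ) : ℂ) +
              2 * ∑ k ∈ Finset.Icc 1 m,
                (-Complex.I) ^ k * ((besselJ k θ : ℝ) : ℂ) *
                  (((Polynomial.Chebyshev.T ℝ k).eval ((y : ℝ) / θ) : ℝ) : ℂ)) -
            Complex.exp ((-Complex.I) * ((y : ℝ) : ℂ)))) ≤
      4 * (Real.exp (1 - θ ^ 2 / (2 * (m : ℝ) + 2) ^ 2) * θ / (2 * (m : ℝ) + 2)) ^ (m + 1) := by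
  have : Nonempty (Set.Icc (-θ) θ) := ⟨⟨0, by constructor <;> linarith⟩⟩
  refine ciSup_le fun ⟨y, hy⟩ => ?_
  set q := θ / (2 * (m : ℝ) + 2)
  have hq : 0 < q := by positivity
  have hq_half : q ≤ 1 / 2 := by rw [div_le_iff₀ (by positivity)]; linarith
  have hx : y / θ ∈ Set.Icc (-1) 1 :=
    ⟨by rw [le_div_iff₀ hθ]; linarith [hy.1], by rw [div_le_one hθ]; exact hy.2⟩
  have herr := norm_sub_le_of_geometric_bound_of_hasSum (by linarith)
    (norm_two_mul_besselJ_mul_chebyshevT_le θ hq (by linarith) hx)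
    (hasSum_besselJ_mul_chebyshevT θ hx) (m + 1)
  have hphase : -I * θ * ((y / θ : ℝ) : ℂ) = -I * y := by
    rw [ofReal_div, mul_assoc, mul_div_cancel₀ _ (ofReal_ne_zero.mpr hθ.ne')]
  rw [sum_range_succ_eq_add_sum_Icc_one, ← Finset.mul_sum, hphase, abs_of_pos hθ] at herr
  simp only [pow_zero, one_mul, Nat.cast_zero, Polynomial.Chebyshev.T_zero, Polynomial.eval_one,
    ofReal_one, mul_one] at herr
  refine (le_of_eq ?_).trans (herr.trans ?_)
  · congr 1
    ring
  · rw [← exp_half_mul_inv_sub_mul_pow_eq θ hθ.ne', div_le_iff₀ (by linarith)]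
    nlinarith [show 0 < Real.exp (θ / 2 * (q⁻¹ - q)) * q ^ (m + 1) by positivity]
end

section
/- Let m be a natural number and let p_m be the polynomial p_m(x) = Σ_{j=0}^m [(2m − j)! m!] / [(2m)! (m − j)! j!] x^j. Then the entire function f(z) = e^{z} p_m(−z) − p_m(z) on ℂ vanishes to order at least 2m + 1 at z = 0; that is, the k-th derivative of f at 0 is zero for every k with 0 ≤ k ≤ 2m. -/
/-!
By Leibniz's rule, `f^{(k)}(0) = Σ_j (-1)^j C(k,j) j! p_j - k! p_k`, where `p_j` are the
coefficients of `p_m`.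
For `j ≤ 2m` one has `j! p_j = C(2m-j, m) · m!² / (2m)!`, so everything reduces to the
identity `Σ_j (-1)^j C(k,j) C(2m-j, m) = C(2m-k, m)` for `k ≤ 2m`. This is the coefficient
of `X^m` in `(X+1)^(2m-k) · X^k = (X+1)^(2m-k) · ((X+1) - 1)^k`, expanded binomially.
-/

open Polynomial Finset Nat

theorem sum_range_neg_one_pow_mul_choose_mul_choose {R : Type*} [CommRing R] (k a b : ℕ) :
    ∑ j ∈ range (k + 1), (-1 : R) ^ j * k.choose j * (a + k - j).choose b =
      if k ≤ b then (a.choose (b - k) : R) else 0 := by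
  have expand : ((X + 1) ^ a * X ^ k : R[X]) =
      ∑ j ∈ range (k + 1), C ((-1 : R) ^ j * k.choose j) * (X + 1) ^ (a + k - j) := by
    calc ((X + 1) ^ a * X ^ k : R[X]) = (X + 1) ^ a * (-1 + (X + 1)) ^ k := by ring
      _ = _ := by
        rw [add_pow (-1) (X + 1), mul_sum]
        refine sum_congr rfl fun j _ => ?_
        rw [show a + k - j = a + (k - j) by grind, pow_add]
        simp only [map_mul, map_pow, map_neg, map_one, map_natCast]
        ring
  have := congrArg (coeff · b) expand
  simp only [coeff_mul_X_pow', finsetSum_coeff, coeff_C_mul, coeff_X_add_one_pow] at this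
  exact this.symm

theorem sum_range_neg_one_pow_mul_choose_mul_choose_two_mul_sub {R : Type*} [CommRing R]
    {m k : ℕ} (hk : k ≤ 2 * m) :
    ∑ j ∈ range (k + 1), (-1 : R) ^ j * k.choose j * (2 * m - j).choose m =
      (2 * m - k).choose m := by
  have key := sum_range_neg_one_pow_mul_choose_mul_choose (R := R) k (2 * m - k) m
  rw [show 2 * m - k + k = 2 * m by omega] at key
  rw [key]
  split_ifs with h
  · rw [Nat.choose_symm_of_eq_add (by omega : 2 * m - k = (m - k) + m)]
  · rw [Nat.choose_eq_zero_of_lt (by omega), Nat.cast_zero]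

noncomputable def padeNumerator (K : Type*) [Field K] (m : ℕ) : K[X] :=
  ∑ j ∈ range (m + 1),
    C ((((2 * m - j)! * m ! : ℕ) : K) / (((2 * m)! * (m - j)! * j ! : ℕ) : K)) * X ^ j

theorem factorial_mul_coeff_padeNumerator (K : Type*) [Field K] [CharZero K] {m j : ℕ}
    (hj : j ≤ 2 * m) :
    (j ! : K) * (padeNumerator K m).coeff j = (2 * m - j).choose m * (m ! ^ 2 / (2 * m)!) := by
  simp only [padeNumerator, finsetSum_coeff, coeff_C_mul_X_pow, sum_ite_eq, mem_range]
  split_ifs with h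
  · rw [Nat.cast_choose K (by omega : m ≤ 2 * m - j), show 2 * m - j - m = m - j by omega]
    push_cast
    field_simp [Nat.cast_ne_zero, Nat.factorial_ne_zero]
  · rw [Nat.choose_eq_zero_of_lt (by omega), Nat.cast_zero, mul_zero, zero_mul]

namespace Polynomial

variable {𝕜 : Type*} [NontriviallyNormedField 𝕜]

theorem iteratedDeriv_eval (p : 𝕜[X]) (n : ℕ) :
    iteratedDeriv n (fun x => p.eval x) = fun x => (derivative^[n] p).eval x := by
  induction n with
  | zero => simp
  | succ n ih =>
    ext x
    rw [iteratedDeriv_succ, ih, Function.iterate_succ_apply', Polynomial.deriv]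

theorem iteratedDeriv_eval_zero (p : 𝕜[X]) (n : ℕ) :
    iteratedDeriv n (fun x => p.eval x) 0 = n ! * p.coeff n := by
  simp only [iteratedDeriv_eval, ← coeff_zero_eq_eval_zero, coeff_iterate_derivative, zero_add,
    descFactorial_self, nsmul_eq_mul]

theorem iteratedDeriv_eval_neg_zero (p : 𝕜[X]) (n : ℕ) :
    iteratedDeriv n (fun x => p.eval (-x)) 0 = (-1) ^ n * (n ! * p.coeff n) := by
  rw [iteratedDeriv_comp_neg n (fun x => p.eval x), neg_zero, iteratedDeriv_eval_zero,
    smul_eq_mul]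

end Polynomial

theorem iteratedDeriv_cexp_mul_eval_neg_sub_eval_zero (q r : ℂ[X]) (k : ℕ) :
    iteratedDeriv k (fun z => Complex.exp z * q.eval (-z) - r.eval z) 0 =
      ∑ j ∈ range (k + 1), (-1) ^ j * k.choose j * (j ! * q.coeff j) - k ! * r.coeff k := by
  have hq : ContDiff ℂ k (fun z => q.eval (-z)) :=
    (q.differentiable.comp differentiable_neg).contDiff
  have hexp_mul : ContDiff ℂ k (fun z => Complex.exp z * q.eval (-z)) :=
    Complex.contDiff_exp.mul hq
  rw [iteratedDeriv_fun_sub hexp_mul.contDiffAt r.differentiable.contDiff.contDiffAt,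
    iteratedDeriv_eval_zero]
  simp_rw [mul_comm (Complex.exp _)]
  rw [iteratedDeriv_fun_mul hq.contDiffAt Complex.contDiff_exp.contDiffAt]
  congr 1
  refine sum_congr rfl fun j _ => ?_
  rw [iteratedDeriv_eval_neg_zero, iteratedDeriv_eq_iterate, Complex.iter_deriv_exp,
    Complex.exp_zero]
  ring

/-- For the numerator `p_m(x) = Σ_{j=0}^m ((2m-j)! m!)/((2m)! (m-j)! j!) x^j` of the
diagonal `[m/m]` Padé approximant of the exponential, the entire function
`f(z) = e^z p_m(-z) - p_m(z)` vanishes to order at least `2m + 1` at `z = 0`: all its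
derivatives of order `k ≤ 2m` vanish at `0`. -/
theorem pade_numerator_defect (m : ℕ) (p : Polynomial ℂ)
    (hp : p = ∑ j ∈ Finset.range (m + 1),
      Polynomial.C
          ((((2 * m - j).factorial * m.factorial : ℕ) : ℂ) /
            ((((2 * m).factorial * (m - j).factorial * j.factorial : ℕ)) : ℂ)) *
        Polynomial.X ^ j) :
    ∀ k : ℕ, k ≤ 2 * m →
      iteratedDeriv k (fun z : ℂ => Complex.exp z * p.eval (-z) - p.eval z) 0 = 0 := by
  intro k hk
  obtain rfl : p = padeNumerator ℂ m := hp
  have hcoeff (j : ℕ) (hj : j ∈ range (k + 1)) :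
      (-1 : ℂ) ^ j * k.choose j * (j ! * (padeNumerator ℂ m).coeff j) =
        (-1) ^ j * k.choose j * (2 * m - j).choose m * (m ! ^ 2 / (2 * m)!) := by
    rw [factorial_mul_coeff_padeNumerator ℂ (by grind), ← mul_assoc]
  rw [iteratedDeriv_cexp_mul_eval_neg_sub_eval_zero, sum_congr rfl hcoeff, ← sum_mul,
    sum_range_neg_one_pow_mul_choose_mul_choose_two_mul_sub hk,
    factorial_mul_coeff_padeNumerator ℂ hk, sub_self]
end

section
/- Let m be a natural number, let p_m(x) = Σ_{j=0}^m [(2m − j)! m!] / [(2m)! (m − j)! j!] x^j, and let A be an N×N complex Hermitian matrix such that the matrix p_m(iA) is invertible. Then the diagonal Padé approximant r = p_m(−iA) · (p_m(iA))^{−1} is unitary: r^H r = I. -/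
open scoped Matrix

/-!
The Padé numerator `p_m` has real coefficients, so for Hermitian `A` the matrix
`B = p_m(iA)` satisfies `Bᴴ = p_m(-iA)`. Both are polynomials in `iA`, hence `B` is normal,
and for an invertible normal `B` the matrix `Bᴴ B⁻¹` is unitary.
-/

namespace Polynomial

theorem star_aeval_of_isSelfAdjoint_coeff {R A : Type*} [CommSemiring R] [StarRing R]
    [Semiring A] [StarRing A] [Algebra R A] [StarModule R A] (p : R[X])
    (hp : ∀ n, IsSelfAdjoint (p.coeff n)) (a : A) :
    star (aeval a p) = aeval (star a) p := by
  simp only [aeval_eq_sum_range, star_sum, star_smul, star_pow, (hp _).star_eq]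

theorem isSelfAdjoint_coeff_sum_C_mul_X_pow {R : Type*} [Semiring R] [StarRing R] (s : Finset ℕ)
    (c : ℕ → R) (hc : ∀ j, IsSelfAdjoint (c j)) (n : ℕ) :
    IsSelfAdjoint ((∑ j ∈ s, C (c j) * X ^ j).coeff n) := by
  rw [finsetSum_coeff]
  refine isSelfAdjoint_sum s fun j _ => ?_
  rw [coeff_C_mul_X_pow]
  split_ifs
  exacts [hc j, .zero R]

theorem commute_aeval_aeval_neg {R A : Type*} [CommRing R] [Ring A] [Algebra R A]
    (p q : R[X]) (a : A) : Commute (aeval a p) (aeval (-a) q) := by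
  have h : aeval (-a) q = aeval a (q.comp (-X)) := by
    rw [aeval_comp, map_neg, aeval_X]
  rw [h]
  exact (Commute.all p _).map (aeval a)

end Polynomial

theorem Matrix.conjTranspose_mul_inv_unitary {n R : Type*} [Fintype n] [DecidableEq n]
    [CommRing R] [StarRing R] (B : Matrix n n R) (hB : IsUnit B) (hnormal : Commute B Bᴴ) :
    (Bᴴ * B⁻¹)ᴴ * (Bᴴ * B⁻¹) = 1 := by
  have hBdet : IsUnit B.det := (isUnit_iff_isUnit_det B).mp hB
  have hBHdet : IsUnit Bᴴ.det := by rw [det_conjTranspose]; exact hBdet.star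
  calc (Bᴴ * B⁻¹)ᴴ * (Bᴴ * B⁻¹)
      = Bᴴ⁻¹ * (B * Bᴴ) * B⁻¹ := by
        rw [conjTranspose_mul, conjTranspose_nonsing_inv, conjTranspose_conjTranspose]
        noncomm_ring
    _ = Bᴴ⁻¹ * Bᴴ * (B * B⁻¹) := by rw [hnormal.eq]; noncomm_ring
    _ = 1 := by rw [nonsing_inv_mul _ hBHdet, mul_nonsing_inv _ hBdet, one_mul]

/-- Let `p_m(x) = Σ_{j=0}^m ((2m-j)! m!)/((2m)! (m-j)! j!) x^j` and let `A` be an `N × N`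
complex Hermitian matrix such that `p_m(iA)` is invertible. Then the diagonal Padé
approximant `r = p_m(-iA) (p_m(iA))⁻¹` is unitary: `rᴴ r = I`. -/
theorem pade_approximant_unitary {N : ℕ} (m : ℕ) (p : Polynomial ℂ)
    (hp : p = ∑ j ∈ Finset.range (m + 1),
      Polynomial.C
          ((((2 * m - j).factorial * m.factorial : ℕ) : ℂ) /
            ((((2 * m).factorial * (m - j).factorial * j.factorial : ℕ)) : ℂ)) *
        Polynomial.X ^ j)
    (A : Matrix (Fin N) (Fin N) ℂ) (hA : A.IsHermitian)
    (hinv : IsUnit (Polynomial.aeval (Complex.I • A) p)) :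
    (Polynomial.aeval ((-Complex.I) • A) p * (Polynomial.aeval (Complex.I • A) p)⁻¹)ᴴ *
        (Polynomial.aeval ((-Complex.I) • A) p * (Polynomial.aeval (Complex.I • A) p)⁻¹) =
      (1 : Matrix (Fin N) (Fin N) ℂ) := by
  have hreal : ∀ n, IsSelfAdjoint (p.coeff n) := by
    rw [hp]
    refine Polynomial.isSelfAdjoint_coeff_sum_C_mul_X_pow _ _ fun j => ?_
    simp [IsSelfAdjoint]
  have hstar : (Complex.I • A)ᴴ = (-Complex.I) • A := by
    rw [Matrix.conjTranspose_smul, hA.eq, Complex.star_def, Complex.conj_I]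
  have hadj : (Polynomial.aeval (Complex.I • A) p)ᴴ = Polynomial.aeval ((-Complex.I) • A) p := by
    rw [← hstar]
    exact Polynomial.star_aeval_of_isSelfAdjoint_coeff p hreal _
  have hnormal : Commute (Polynomial.aeval (Complex.I • A) p)
      (Polynomial.aeval (Complex.I • A) p)ᴴ := by
    rw [hadj, neg_smul]
    exact Polynomial.commute_aeval_aeval_neg p p _
  rw [← hadj]
  exact Matrix.conjTranspose_mul_inv_unitary _ hinv hnormal
end
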